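/- Let T be a right generalized inverse ∗-semigroup, S an inverse semigroup, and θ : T → S a semigroup homomorphism such that for every idempotent e of T and all a, b ∈ T with a·e = a and b·e = b, θ(a) = θ(b) implies a = b. Then the kernel of θ equals γ: for all a, b ∈ T, θ(a) = θ(b) if and only if V(a) ∩ V(b) ≠ ∅. -/

import Mathlib

/-- `t` is a (von Neumann) inverse of `s`. -/
def IsInvOf {S : Type*} [Semigroup S] (t s : S) : Prop :=
  s * t * s = s ∧ t * s * t = t

/-- `e` is an idempotent. -/
def IsIdem {S : Type*} [Semigroup S] (e : S) : Prop := e * e = e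

/-- A right generalized inverse semigroup: every element is regular, the product of
idempotents is idempotent, and idempotents satisfy the right normality law `e*f*g = f*e*g`. -/
structure IsRGIS (S : Type*) [Semigroup S] : Prop where
  regular : ∀ s : S, ∃ t, IsInvOf t s
  idem_mul : ∀ e f : S, IsIdem e → IsIdem f → IsIdem (e * f)
  right_normal : ∀ e f g : S, IsIdem e → IsIdem f → IsIdem g → e * f * g = f * e * g

/-- A right ∗-semigroup structure: axioms (S1)-(S4). -/
structure IsRightStar (S : Type*) [Semigroup S] (star : S → S) : Prop where
  s1 : ∀ s : S, star (star s) = s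
  s2 : ∀ s : S, IsInvOf (star s) s
  s3 : ∀ s t : S, star (s * t) = star t * star (s * t * star t)
  s4 : ∀ e : S, IsIdem e → star e = e

/-- An inverse semigroup: `inv s` is an inverse of `s`, and inverses are unique. -/
structure IsInverseSemigroup (S : Type*) [Semigroup S] (inv : S → S) : Prop where
  inv_spec : ∀ s : S, IsInvOf (inv s) s
  inv_unique : ∀ s t : S, IsInvOf t s → t = inv s

/-- The relation γ : `a γ b` iff `V(a) ∩ V(b) ≠ ∅`. -/
def GammaRel {S : Type*} [Semigroup S] (a b : S) : Prop :=
  ∃ t, IsInvOf t a ∧ IsInvOf t b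

/-- The natural partial order on a regular semigroup. -/
def NatLe {S : Type*} [Semigroup S] (a b : S) : Prop :=
  ∃ e f : S, IsIdem e ∧ IsIdem f ∧ a = e * b ∧ a = b * f

/-- Green's L relation. -/
def GreenL {S : Type*} [Semigroup S] (a b : S) : Prop :=
  a = b ∨ ∃ x y : S, a = x * b ∧ b = y * a

/-- An étale homomorphism: for every idempotent `e` of `T`, `θ` restricts to a bijection
from `T·e` onto `S·θ(e)`. -/
def IsEtaleHom {T S : Type*} [Semigroup T] [Semigroup S] (θ : T → S) : Prop :=
  ∀ e : T, IsIdem e →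
    (∀ a b : T, a * e = a → b * e = b → θ a = θ b → a = b) ∧
    (∀ s : S, s * θ e = s → ∃ a : T, a * e = a ∧ θ a = s)

/-!
If `θ a = θ b` and `a'` is an inverse of `a`, then `a` and `b * (a' * a)` lie in `T (a' * a)` and have
the same image, so `a = b * (a' * a)`; symmetrically `b = a * (b' * b)`. Right normality of the
idempotents then gives `a * b' * a = a`, and `b' * a * b'` is a common inverse of `a` and `b`.
Conversely, `θ` maps a common inverse of `a` and `b` to a common inverse of `θ a` and `θ b`, and in an
inverse semigroup two elements with a common inverse are equal.
-/

section Semigroup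

variable {S : Type*} [Semigroup S]

theorem IsInvOf.symm {t s : S} (h : IsInvOf t s) : IsInvOf s t :=
  ⟨h.2, h.1⟩

theorem IsInvOf.isIdem_mul {t s : S} (h : IsInvOf t s) : IsIdem (t * s) := by
  rw [IsIdem, mul_assoc, ← mul_assoc s, h.1]

theorem isInvOf_mul_mul_of_mul_mul_eq {a x : S} (h : a * x * a = a) : IsInvOf (x * a * x) a := by
  constructor
  · calc a * (x * a * x) * a = (a * x * a) * x * a := by simp only [mul_assoc]
      _ = a := by rw [h, h]
  · calc x * a * x * a * (x * a * x) = x * ((a * x * a) * x * a) * x := by simp only [mul_assoc]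
      _ = x * a * x := by rw [h, h]

theorem gammaRel_of_mul_mul_eq {a b b' : S} (hb : IsInvOf b' b) (ha : a * b' * a = a)
    (hab : a * b' * b = b) : GammaRel a b := by
  refine ⟨b' * a * b', isInvOf_mul_mul_of_mul_mul_eq ha, ?_, ?_⟩
  · calc b * (b' * a * b') * b = b * b' * (a * b' * b) := by simp only [mul_assoc]
      _ = b := by rw [hab, hb.1]
  · calc b' * a * b' * b * (b' * a * b') = b' * a * (b' * b * b') * a * b' := by
          simp only [mul_assoc]
      _ = b' * (a * b' * a) * b' := by rw [hb.2]; simp only [mul_assoc]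
      _ = b' * a * b' := by rw [ha]

theorem IsRGIS.mul_mul_eq_of_eq_mul_mul (h : IsRGIS S) {a a' b b' : S} (ha : IsInvOf a' a)
    (hb : IsInvOf b' b) (hab : a = b * (a' * a)) : a * b' * a = a := by
  have he := ha.isIdem_mul
  have hf := hb.isIdem_mul
  calc a * b' * a = b * ((a' * a) * (b' * b) * (a' * a)) := by
        nth_rewrite 1 [hab]; nth_rewrite 2 [hab]; simp only [mul_assoc]
    _ = b * b' * b * (a' * a) := by
        rw [h.right_normal _ _ _ he hf he, mul_assoc (b' * b), he]; simp only [mul_assoc]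
    _ = a := by rw [hb.1, ← hab]

theorem IsInverseSemigroup.eq_of_isInvOf {inv : S → S} (hS : IsInverseSemigroup S inv)
    {t a b : S} (ha : IsInvOf t a) (hb : IsInvOf t b) : a = b :=
  (hS.inv_unique t a ha.symm).trans (hS.inv_unique t b hb.symm).symm

end Semigroup

section Hom

variable {T S : Type*} [Semigroup T] [Semigroup S]

theorem IsInvOf.map (θ : T →ₙ* S) {t s : T} (h : IsInvOf t s) : IsInvOf (θ t) (θ s) :=
  ⟨by rw [← map_mul, ← map_mul, h.1], by rw [← map_mul, ← map_mul, h.2]⟩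

theorem eq_mul_inv_mul_of_map_eq {θ : T →ₙ* S}
    (hinj : ∀ e : T, IsIdem e → ∀ a b : T, a * e = a → b * e = b → θ a = θ b → a = b)
    {a a' b : T} (ha : IsInvOf a' a) (h : θ a = θ b) : a = b * (a' * a) := by
  have he := ha.isIdem_mul
  refine hinj _ he _ _ (by rw [← mul_assoc, ha.1]) (by rw [mul_assoc, he]) ?_
  rw [map_mul, map_mul, ← h, ← mul_assoc, (ha.map θ).1]

end Hom

theorem etale_kernel_is_gamma_general {T S : Type*} [Semigroup T] [Semigroup S]
    (hT : IsRGIS T)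
    (inv : S → S) (hS : IsInverseSemigroup S inv)
    (θ : T → S) (hhom : ∀ a b : T, θ (a * b) = θ a * θ b)
    (hinj : ∀ e : T, IsIdem e → ∀ a b : T, a * e = a → b * e = b → θ a = θ b → a = b) :
    ∀ a b : T, θ a = θ b ↔ GammaRel a b := by
  let θ' : T →ₙ* S := ⟨θ, hhom⟩
  intro a b
  constructor
  · intro h
    obtain ⟨a', ha⟩ := hT.regular a
    obtain ⟨b', hb⟩ := hT.regular b
    have hab := eq_mul_inv_mul_of_map_eq (θ := θ') hinj ha h
    have hba := eq_mul_inv_mul_of_map_eq (θ := θ') hinj hb h.symm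
    refine gammaRel_of_mul_mul_eq hb (hT.mul_mul_eq_of_eq_mul_mul ha hb hab) ?_
    rw [mul_assoc, ← hba]
  · rintro ⟨t, ha, hb⟩
    exact hS.eq_of_isInvOf (ha.map θ') (hb.map θ')

/-- Proposition 2.4(2): if `θ` is injective on each `Te`, then its kernel is γ. -/
theorem etale_kernel_is_gamma {T S : Type*} [Semigroup T] [Semigroup S]
    (hT : IsRGIS T) (star : T → T) (hstar : IsRightStar T star)
    (inv : S → S) (hS : IsInverseSemigroup S inv)
    (θ : T → S) (hhom : ∀ a b : T, θ (a * b) = θ a * θ b)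
    (hinj : ∀ e : T, IsIdem e → ∀ a b : T, a * e = a → b * e = b → θ a = θ b → a = b) :
    ∀ a b : T, θ a = θ b ↔ GammaRel a b :=
  etale_kernel_is_gamma_general hT inv hS θ hhom hinj
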